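/- arXiv:2002.03812 — 18 statements merged into one kernel-verified Lean document; each statement's English description precedes it below -/
import Mathlib

section
/- If A is an n×n complex matrix and X is an n×n complex matrix satisfying XA² = A and AX² = X, then X satisfies AXA = A and XAX = X. -/
open Matrix

theorem stmt_0 {n : ℕ} (A X : Matrix (Fin n) (Fin n) ℂ)
    (h6 : X * A ^ 2 = A) (h7 : A * X ^ 2 = X) :
    A * X * A = A ∧ X * A * X = X := by
  constructor
  · calc A * X * A = A * X * (X * A ^ 2) := by rw [h6]
    _ = A * X ^ 2 * A ^ 2 := by noncomm_ring
    _ = X * A ^ 2 := by rw [h7]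
    _ = A := h6
  · calc X * A * X = X * A * (A * X ^ 2) := by rw [h7]
    _ = X * A ^ 2 * X ^ 2 := by noncomm_ring
    _ = A * X ^ 2 := by rw [h6]
    _ = X := h7
end

section
/- If A is an n×n complex matrix and X is an n×n complex matrix satisfying A²X = A and X²A = X, then X satisfies AXA = A and XAX = X. -/
open Matrix

theorem stmt_1 {n : ℕ} (A X : Matrix (Fin n) (Fin n) ℂ)
    (h8 : A ^ 2 * X = A) (h9 : X ^ 2 * A = X) :
    A * X * A = A ∧ X * A * X = X := by
  constructor
  · calc A * X * A = (A ^ 2 * X) * X * A := by rw [h8]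
      _ = A ^ 2 * (X ^ 2 * A) := by noncomm_ring
      _ = A ^ 2 * X := by rw [h9]
      _ = A := h8
  · calc X * A * X = (X ^ 2 * A) * A * X := by rw [h9]
      _ = X ^ 2 * (A ^ 2 * X) := by noncomm_ring
      _ = X ^ 2 * A := by rw [h8]
      _ = X := h9
end

section
/- Let M be an invertible Hermitian n×n matrix and A an n×n complex matrix of index at most 1. Then the M-weighted core inverse of A is unique: if X and Y both satisfy (MAX)* = MAX, XA² = A, AX² = X (and similarly for Y with A), then X = Y. -/
open Matrix

theorem stmt_2 {n : ℕ} (M A X Y : Matrix (Fin n) (Fin n) ℂ)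
    (hM : Mᴴ = M) (hMu : IsUnit M)
    (hind : (A ^ 2).rank = A.rank)
    (hX3 : (M * A * X)ᴴ = M * A * X) (hX6 : X * A ^ 2 = A) (hX7 : A * X ^ 2 = X)
    (hY3 : (M * A * Y)ᴴ = M * A * Y) (hY6 : Y * A ^ 2 = A) (hY7 : A * Y ^ 2 = Y) :
    X = Y := by
  have hAXA : A * X * A = A := by
    calc A * X * A = A * X * (X * A ^ 2) := by rw [hX6]
    _ = (A * X ^ 2) * A ^ 2 := by noncomm_ring
    _ = X * A ^ 2 := by rw [hX7]
    _ = A := hX6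
  have hAYA : A * Y * A = A := by
    calc A * Y * A = A * Y * (Y * A ^ 2) := by rw [hY6]
    _ = (A * Y ^ 2) * A ^ 2 := by noncomm_ring
    _ = Y * A ^ 2 := by rw [hY7]
    _ = A := hY6
  have hXAX : X * A * X = X := by
    calc X * A * X = X * A * (A * X ^ 2) := by rw [hX7]
    _ = (X * A ^ 2) * X ^ 2 := by noncomm_ring
    _ = A * X ^ 2 := by rw [hX6]
    _ = X := hX7
  have hYAY : Y * A * Y = Y := by
    calc Y * A * Y = Y * A * (A * Y ^ 2) := by rw [hY7]
    _ = (Y * A ^ 2) * Y ^ 2 := by noncomm_ring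
    _ = A * Y ^ 2 := by rw [hY6]
    _ = Y := hY7
  have hMXY : M * A * X = M * A * Y := by
    calc M * A * X = M * (A * Y * A) * X := by rw [hAYA]
    _ = (M * A * Y) * (A * X) := by noncomm_ring
    _ = (M * A * Y)ᴴ * (A * X) := by rw [hY3]
    _ = Yᴴ * Aᴴ * (M * A * X) := by
        simp [conjTranspose_mul, hM, mul_assoc]
    _ = Yᴴ * Aᴴ * (M * A * X)ᴴ := by rw [hX3]
    _ = (M * (A * X * A) * Y)ᴴ := by
        simp [conjTranspose_mul, hM, mul_assoc]
    _ = (M * A * Y)ᴴ := by rw [hAXA]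
    _ = M * A * Y := hY3
  have hAX : A * X = A * Y := by
    apply hMu.mul_right_injective
    calc M * (A * X) = M * A * X := by rw [mul_assoc]
    _ = M * A * Y := hMXY
    _ = M * (A * Y) := by rw [mul_assoc]
  have hA : A = A ^ 2 * (X ^ 2 * A) := by
    calc A = A * X * A := hAXA.symm
    _ = A * (A * X ^ 2) * A := by rw [hX7]
    _ = A ^ 2 * (X ^ 2 * A) := by noncomm_ring
  have hXA : X * A = Y * A := by
    calc X * A = X * (A ^ 2 * (X ^ 2 * A)) := by rw [← hA]
    _ = (X * A ^ 2) * (X ^ 2 * A) := by noncomm_ring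
    _ = (Y * A ^ 2) * (X ^ 2 * A) := by rw [hX6, hY6]
    _ = Y * (A ^ 2 * (X ^ 2 * A)) := by noncomm_ring
    _ = Y * A := by rw [← hA]
  calc X = X * A * X := hXAX.symm
  _ = X * (A * Y) := by rw [mul_assoc, hAX]
  _ = Y * A * Y := by rw [← mul_assoc, hXA]
  _ = Y := hYAY
end

section
/- Let N be an invertible Hermitian n×n matrix and A an n×n complex matrix. Then the N-weighted dual core inverse of A is unique: if X and Y both satisfy (NXA)* = NXA, A²X = A, X²A = X, then X = Y. -/
open Matrix

theorem stmt_3 {n : ℕ} (N A X Y : Matrix (Fin n) (Fin n) ℂ)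
    (hN : Nᴴ = N) (hNu : IsUnit N)
    (hX4 : (N * X * A)ᴴ = N * X * A) (hX8 : A ^ 2 * X = A) (hX9 : X ^ 2 * A = X)
    (hY4 : (N * Y * A)ᴴ = N * Y * A) (hY8 : A ^ 2 * Y = A) (hY9 : Y ^ 2 * A = Y) :
    X = Y := by
  have hX8' : A*(A*X) = A := by simpa [pow_two, mul_assoc] using hX8
  have hX9' : X*(X*A) = X := by simpa [pow_two, mul_assoc] using hX9
  have hY8' : A*(A*Y) = A := by simpa [pow_two, mul_assoc] using hY8
  have hY9' : Y*(Y*A) = Y := by simpa [pow_two, mul_assoc] using hY9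
  have keyX : A*(X*A) = A := by
    calc A*(X*A) = (A*(A*X))*(X*A) := by rw [hX8']
    _ = A*(A*(X*(X*A))) := by simp only [mul_assoc]
    _ = A := by rw [hX9', hX8']
  have keyY : A*(Y*A) = A := by
    calc A*(Y*A) = (A*(A*Y))*(Y*A) := by rw [hY8']
    _ = A*(A*(Y*(Y*A))) := by simp only [mul_assoc]
    _ = A := by rw [hY9', hY8']
  have hX4' : Aᴴ*(Xᴴ*N) = N*(X*A) := by
    simpa [conjTranspose_mul, hN, mul_assoc] using hX4
  have hY4' : Aᴴ*(Yᴴ*N) = N*(Y*A) := by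
    simpa [conjTranspose_mul, hN, mul_assoc] using hY4
  have h0 : (N*(X*A))*(Y*A) = N*(X*A) := by
    simp only [mul_assoc]; rw [keyY]
  have h1 := congrArg conjTranspose h0
  simp only [conjTranspose_mul, hN, mul_assoc] at h1
  rw [hX4'] at h1
  have Eq2 : N*(Y*A) = N*(X*A) := by
    calc N*(Y*A) = N*(Y*(A*(X*A))) := by rw [keyX]
    _ = (N*(Y*A))*(X*A) := by simp only [mul_assoc]
    _ = (Aᴴ*(Yᴴ*N))*(X*A) := by rw [hY4']
    _ = Aᴴ*(Yᴴ*(N*(X*A))) := by simp only [mul_assoc]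
    _ = N*(X*A) := h1
  have hXAYA : X*A = Y*A := hNu.mul_left_cancel Eq2.symm
  have hYAY : Y*(A*Y) = Y := by
    calc Y*(A*Y) = (Y*(Y*A))*(A*Y) := by rw [hY9']
    _ = Y*(Y*(A*(A*Y))) := by simp only [mul_assoc]
    _ = Y := by rw [hY8', hY9']
  calc X = X*(X*A) := hX9'.symm
  _ = X*(X*(A*(A*Y))) := by rw [hY8']
  _ = (X*(X*A))*(A*Y) := by simp only [mul_assoc]
  _ = X*(A*Y) := by rw [hX9']
  _ = (X*A)*Y := by simp only [mul_assoc]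
  _ = (Y*A)*Y := by rw [hXAYA]
  _ = Y*(A*Y) := by rw [mul_assoc]
  _ = Y := hYAY
end

section
/- Let M be an invertible Hermitian matrix and A a square complex matrix. If X satisfies (MAX)* = MAX, XA² = A, and AX² = X, then A has a group inverse and A^# = X²A. -/
open Matrix

theorem stmt_4 {n : ℕ} (M A X : Matrix (Fin n) (Fin n) ℂ)
    (hM : Mᴴ = M) (hMu : IsUnit M)
    (h3 : (M * A * X)ᴴ = M * A * X) (h6 : X * A ^ 2 = A) (h7 : A * X ^ 2 = X) :
    A * (X ^ 2 * A) * A = A ∧ (X ^ 2 * A) * A * (X ^ 2 * A) = X ^ 2 * A ∧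
      A * (X ^ 2 * A) = (X ^ 2 * A) * A := by
  simp only [pow_two] at h6 h7 ⊢
  have hAY : A * (X * X * A) = X * A := by
    calc A * (X * X * A) = A * (X * X) * A := by noncomm_ring
    _ = X * A := by rw [h7]
  have hYA : X * X * A * A = X * A := by
    calc X * X * A * A = X * (X * (A * A)) := by noncomm_ring
    _ = X * A := by rw [h6]
  refine ⟨?_, ?_, ?_⟩
  · calc A * (X * X * A) * A = X * A * A := by rw [hAY]
    _ = X * (A * A) := by noncomm_ring
    _ = A := h6
  · calc X * X * A * A * (X * X * A) = X * A * (X * X * A) := by rw [hYA]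
    _ = X * (A * (X * X)) * A := by noncomm_ring
    _ = X * X * A := by rw [h7]
  · rw [hAY, hYA]
end

section
/- Let M be an invertible Hermitian matrix, A a square complex matrix possessing a group inverse A^#, and X a matrix satisfying AXA = A and (MAX)* = MAX. Then Y = A^# A X satisfies (MAY)* = MAY, YA² = A, and AY² = Y, i.e., Y is the M-weighted core inverse of A. -/
open Matrix

theorem stmt_5 {n : ℕ} (M A G X : Matrix (Fin n) (Fin n) ℂ)
    (hM : Mᴴ = M) (hMu : IsUnit M)
    (hG1 : A * G * A = A) (hG2 : G * A * G = G) (hG5 : A * G = G * A)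
    (hX1 : A * X * A = A) (hX3 : (M * A * X)ᴴ = M * A * X) :
    (M * A * (G * A * X))ᴴ = M * A * (G * A * X) ∧
      (G * A * X) * A ^ 2 = A ∧ A * (G * A * X) ^ 2 = G * A * X := by
  have h1 : A * (G * A * X) = A * X := by
    rw [← mul_assoc, ← mul_assoc, hG1]
  refine ⟨?_, ?_, ?_⟩
  · rw [mul_assoc M A (G * A * X), h1, ← mul_assoc]
    exact hX3
  · have k1 : G * A * X * A = G * A := by
      rw [mul_assoc (G * A) X A, mul_assoc G A (X * A), ← mul_assoc A X A, hX1]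
    rw [sq, ← mul_assoc, k1, ← hG5, hG1]
  · rw [sq, ← mul_assoc, h1, ← mul_assoc (A * X) (G * A) X, ← hG5,
      ← mul_assoc (A * X) A G, hX1, hG5]
end

section
/- Let M be an invertible Hermitian matrix and A a square complex matrix. Then A has an M-weighted core inverse if and only if B = M⁻¹A*M has an M-weighted dual core inverse, and in that case (M⁻¹A*M)^{M,dual-core} = M⁻¹ (A^{core,M})* M. -/
open Matrix

lemma aux_core_to_dual {n : ℕ} (M A X : Matrix (Fin n) (Fin n) ℂ)
    (hM : Mᴴ = M) (hMu : IsUnit M)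
    (h1 : (M * A * X)ᴴ = M * A * X) (h2 : X * A ^ 2 = A) (h3 : A * X ^ 2 = X) :
    (M * (M⁻¹ * Xᴴ * M) * (M⁻¹ * Aᴴ * M))ᴴ = M * (M⁻¹ * Xᴴ * M) * (M⁻¹ * Aᴴ * M) ∧
      (M⁻¹ * Aᴴ * M) ^ 2 * (M⁻¹ * Xᴴ * M) = M⁻¹ * Aᴴ * M ∧
      (M⁻¹ * Xᴴ * M) ^ 2 * (M⁻¹ * Aᴴ * M) = M⁻¹ * Xᴴ * M := by
  have hd : IsUnit M.det := (Matrix.isUnit_iff_isUnit_det M).mp hMu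
  have hmm : M * M⁻¹ = 1 := Matrix.mul_nonsing_inv M hd
  have hmm' : M⁻¹ * M = 1 := Matrix.nonsing_inv_mul M hd
  have c1 : ∀ B : Matrix (Fin n) (Fin n) ℂ, M * (M⁻¹ * B) = B := fun B =>
    Matrix.mul_nonsing_inv_cancel_left M B hd
  have c2 : ∀ B : Matrix (Fin n) (Fin n) ℂ, M⁻¹ * (M * B) = B := fun B =>
    Matrix.nonsing_inv_mul_cancel_left M B hd
  have k2' : Aᴴ * (Aᴴ * Xᴴ) = Aᴴ := by
    have := congrArg conjTranspose h2
    simpa [sq, conjTranspose_mul, mul_assoc] using this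
  have k3' : Xᴴ * (Xᴴ * Aᴴ) = Xᴴ := by
    have := congrArg conjTranspose h3
    simpa [sq, conjTranspose_mul, mul_assoc] using this
  have k2 : ∀ C : Matrix (Fin n) (Fin n) ℂ, Aᴴ * (Aᴴ * (Xᴴ * C)) = Aᴴ * C := by
    intro C
    calc Aᴴ * (Aᴴ * (Xᴴ * C)) = Aᴴ * (Aᴴ * Xᴴ) * C := by simp [mul_assoc]
      _ = Aᴴ * C := by rw [k2']
  have k3 : ∀ C : Matrix (Fin n) (Fin n) ℂ, Xᴴ * (Xᴴ * (Aᴴ * C)) = Xᴴ * C := by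
    intro C
    calc Xᴴ * (Xᴴ * (Aᴴ * C)) = Xᴴ * (Xᴴ * Aᴴ) * C := by simp [mul_assoc]
      _ = Xᴴ * C := by rw [k3']
  have key : Xᴴ * (Aᴴ * M) = M * (A * X) := by
    calc Xᴴ * (Aᴴ * M) = (M * A * X)ᴴ := by
          simp [conjTranspose_mul, hM, mul_assoc]
      _ = M * (A * X) := by rw [h1, mul_assoc]
  refine ⟨?_, ?_, ?_⟩
  · have e : M * (M⁻¹ * Xᴴ * M) * (M⁻¹ * Aᴴ * M) = M * A * X := by
      simp [mul_assoc, c1, key]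
    rw [e, h1]
  · simp [sq, mul_assoc, c1, c2, hmm, hmm', k2]
  · simp [sq, mul_assoc, c1, c2, hmm, hmm', k3]

theorem stmt_7 {n : ℕ} (M A : Matrix (Fin n) (Fin n) ℂ)
    (hM : Mᴴ = M) (hMu : IsUnit M) :
    ((∃ X, (M * A * X)ᴴ = M * A * X ∧ X * A ^ 2 = A ∧ A * X ^ 2 = X) ↔
      (∃ Y, (M * Y * (M⁻¹ * Aᴴ * M))ᴴ = M * Y * (M⁻¹ * Aᴴ * M) ∧
        (M⁻¹ * Aᴴ * M) ^ 2 * Y = M⁻¹ * Aᴴ * M ∧ Y ^ 2 * (M⁻¹ * Aᴴ * M) = Y)) ∧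
    (∀ X, (M * A * X)ᴴ = M * A * X → X * A ^ 2 = A → A * X ^ 2 = X →
      (M * (M⁻¹ * Xᴴ * M) * (M⁻¹ * Aᴴ * M))ᴴ = M * (M⁻¹ * Xᴴ * M) * (M⁻¹ * Aᴴ * M) ∧
        (M⁻¹ * Aᴴ * M) ^ 2 * (M⁻¹ * Xᴴ * M) = M⁻¹ * Aᴴ * M ∧
        (M⁻¹ * Xᴴ * M) ^ 2 * (M⁻¹ * Aᴴ * M) = M⁻¹ * Xᴴ * M) := by
  have hd : IsUnit M.det := (Matrix.isUnit_iff_isUnit_det M).mp hMu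
  have hmm : M * M⁻¹ = 1 := Matrix.mul_nonsing_inv M hd
  have hmm' : M⁻¹ * M = 1 := Matrix.nonsing_inv_mul M hd
  have hMi : M⁻¹ᴴ = M⁻¹ := by rw [Matrix.conjTranspose_nonsing_inv, hM]
  have c1 : ∀ B : Matrix (Fin n) (Fin n) ℂ, M * (M⁻¹ * B) = B := fun B =>
    Matrix.mul_nonsing_inv_cancel_left M B hd
  have c2 : ∀ B : Matrix (Fin n) (Fin n) ℂ, M⁻¹ * (M * B) = B := fun B =>
    Matrix.nonsing_inv_mul_cancel_left M B hd
  constructor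
  · constructor
    · rintro ⟨X, h1, h2, h3⟩
      exact ⟨M⁻¹ * Xᴴ * M, aux_core_to_dual M A X hM hMu h1 h2 h3⟩
    · rintro ⟨Y, h1, h2, h3⟩
      refine ⟨M⁻¹ * Yᴴ * M, ?_, ?_, ?_⟩
      · have e : M * A * (M⁻¹ * Yᴴ * M) = M * Y * (M⁻¹ * Aᴴ * M) := by
          calc M * A * (M⁻¹ * Yᴴ * M) = (M * Y * (M⁻¹ * Aᴴ * M))ᴴ := by
                simp [conjTranspose_mul, hM, hMi, mul_assoc]
            _ = M * Y * (M⁻¹ * Aᴴ * M) := h1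
        rw [e, h1]
      · have h2' := congrArg conjTranspose h2
        simp only [sq, conjTranspose_mul, conjTranspose_conjTranspose, hM, hMi,
          mul_assoc, c1, c2] at h2'
        have h2'' := congrArg (fun Z => M⁻¹ * Z * M) h2'
        simp only [mul_assoc, hmm, hmm', c1, c2, mul_one] at h2''
        simpa [sq, mul_assoc, c1, c2] using h2''
      · have h3' := congrArg conjTranspose h3
        simp only [sq, conjTranspose_mul, conjTranspose_conjTranspose, hM, hMi,
          mul_assoc, c1, c2] at h3'
        have h3'' := congrArg (fun Z => M⁻¹ * Z * M) h3'
        simp only [mul_assoc, hmm, hmm', c1, c2, mul_one] at h3''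
        simpa [sq, mul_assoc, c1, c2] using h3''
  · intro X h1 h2 h3
    exact aux_core_to_dual M A X hM hMu h1 h2 h3
end

section
/- Let M be an invertible Hermitian matrix and A a square matrix. If X satisfies XAX = X, (MAX)* = MAX, and XA² = A, then X is the M-weighted core inverse of A (i.e., X additionally satisfies AX² = X). -/
open Matrix

theorem stmt_8 {n : ℕ} (M A X : Matrix (Fin n) (Fin n) ℂ)
    (hM : Mᴴ = M) (hMu : IsUnit M)
    (h2 : X * A * X = X) (h3 : (M * A * X)ᴴ = M * A * X) (h6 : X * A ^ 2 = A) :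
    A * X ^ 2 = X := by
  -- Work with the associated linear maps.
  set f := A.mulVecLin with hf
  set g := X.mulVecLin with hg
  have h2' : g ∘ₗ f ∘ₗ g = g := by
    have := congrArg Matrix.mulVecLin h2
    simpa [Matrix.mulVecLin_mul, LinearMap.comp_assoc] using this
  have h6' : g ∘ₗ f ∘ₗ f = f := by
    have := congrArg Matrix.mulVecLin h6
    simpa [Matrix.mulVecLin_mul, sq, LinearMap.comp_assoc] using this
  set Q := f ∘ₗ g with hQ
  -- Q is idempotent
  have hQidem : Q ∘ₗ Q = Q := by
    rw [hQ]
    calc (f ∘ₗ g) ∘ₗ f ∘ₗ g = f ∘ₗ (g ∘ₗ f ∘ₗ g) := by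
          simp [LinearMap.comp_assoc]
      _ = f ∘ₗ g := by rw [h2']
  -- range f ≤ range g
  have hfg : LinearMap.range f ≤ LinearMap.range g := by
    conv_lhs => rw [← h6']
    rw [LinearMap.range_comp]
    exact LinearMap.map_le_range
  -- range Q ≤ range f ≤ range g
  have hQf : LinearMap.range Q ≤ LinearMap.range g := by
    refine le_trans ?_ hfg
    rw [hQ, LinearMap.range_comp]
    exact LinearMap.map_le_range
  -- finrank (range g) ≤ finrank (range Q), since g = g ∘ Q
  have hgQ : g ∘ₗ Q = g := by
    rw [hQ, ← LinearMap.comp_assoc] at h2' ⊢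
    exact h2'
  have hrank : Module.finrank ℂ (LinearMap.range g) ≤
      Module.finrank ℂ (LinearMap.range Q) := by
    conv_lhs => rw [← hgQ]
    rw [LinearMap.range_comp]
    exact Submodule.finrank_map_le g (LinearMap.range Q)
  -- hence range Q = range g
  have hEq : LinearMap.range Q = LinearMap.range g :=
    Submodule.eq_of_le_of_finrank_le hQf hrank
  -- Q acts as identity on its range
  have hfix : ∀ x ∈ LinearMap.range Q, Q x = x := by
    rintro x ⟨w, rfl⟩
    have := congrFun (congrArg (fun h => h.toFun) hQidem) w
    simpa using this
  -- conclude Q ∘ g = g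
  have hfinal : Q ∘ₗ g = g :=
    LinearMap.ext fun v => hfix _ (hEq.ge ⟨v, rfl⟩)
  -- back to matrices
  have hml : (A * X ^ 2).mulVecLin = X.mulVecLin := by
    have hx : (A * X ^ 2).mulVecLin = f ∘ₗ g ∘ₗ g := by
      simp [Matrix.mulVecLin_mul, sq, hf, hg, LinearMap.comp_assoc]
    rw [hx, ← LinearMap.comp_assoc, ← hQ, hfinal]
  ext i j
  have := congrFun (congrArg (fun h => h.toFun) hml) (Pi.single j 1)
  simpa [Matrix.mulVecLin_apply, Matrix.mulVec_single, Matrix.mul_apply, Matrix.mulVec, dotProduct, Matrix.col_apply, Pi.single_apply, mul_ite, Finset.sum_ite_eq, Finset.sum_ite_eq'] using congrFun this i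
end

section
/- Let M be an invertible Hermitian matrix and A a square matrix having a group inverse. If X satisfies AXA = A, (MAX)* = MAX, and AX² = X, then X is the M-weighted core inverse of A (i.e., X additionally satisfies XA² = A). -/
open Matrix

theorem stmt_9 {n : ℕ} (M A G X : Matrix (Fin n) (Fin n) ℂ)
    (hM : Mᴴ = M) (hMu : IsUnit M)
    (hG1 : A * G * A = A) (hG2 : G * A * G = G) (hG5 : A * G = G * A)
    (h1 : A * X * A = A) (h3 : (M * A * X)ᴴ = M * A * X) (h7 : A * X ^ 2 = X) :
    X * A ^ 2 = A := by
  have hx : A * X * X = X := by rw [pow_two, ← mul_assoc] at h7; exact h7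
  have hAGX : A * G * X = X := by
    calc A * G * X = A * G * (A * X * X) := by rw [hx]
    _ = (A * G * A) * X * X := by simp only [mul_assoc]
    _ = A * X * X := by rw [hG1]
    _ = X := hx
  have hGA : G * A = X * A := by
    calc G * A = G * (A * X * A) := by rw [h1]
    _ = (A * G) * X * A := by rw [hG5]; simp only [mul_assoc]
    _ = X * A := by rw [hAGX]
  calc X * A ^ 2 = (X * A) * A := by rw [pow_two, ← mul_assoc]
  _ = (G * A) * A := by rw [hGA]
  _ = (A * G) * A := by rw [hG5]
  _ = A := hG1
end

section
/- Let M, N be invertible Hermitian matrices and A a square matrix. If X is a generalized weighted Moore-Penrose inverse of A with respect to (M,N), then P = AX and Q = XA are idempotents with MP Hermitian, NQ Hermitian, and these idempotents are unique among idempotents P₁, Q₁ satisfying MP₁ Hermitian, NQ₁ Hermitian, range(P₁) = range(A), row space of Q₁ equals row space of A. -/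
open Matrix

theorem stmt_10 {n : ℕ} (M N A X : Matrix (Fin n) (Fin n) ℂ)
    (hM : Mᴴ = M) (hMu : IsUnit M) (hN : Nᴴ = N) (hNu : IsUnit N)
    (h1 : A * X * A = A) (h2 : X * A * X = X)
    (h3 : (M * A * X)ᴴ = M * A * X) (h4 : (N * X * A)ᴴ = N * X * A) :
    ((A * X) * (A * X) = A * X) ∧ ((X * A) * (X * A) = X * A) ∧
      (M * (A * X))ᴴ = M * (A * X) ∧ (N * (X * A))ᴴ = N * (X * A) ∧
      (∀ P₁ Q₁ : Matrix (Fin n) (Fin n) ℂ,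
        P₁ * P₁ = P₁ → Q₁ * Q₁ = Q₁ →
        (M * P₁)ᴴ = M * P₁ → (N * Q₁)ᴴ = N * Q₁ →
        (∃ U, P₁ = A * U) → (∃ V, A = P₁ * V) →
        (∃ U, Q₁ = U * A) → (∃ V, A = V * Q₁) →
        P₁ = A * X ∧ Q₁ = X * A) := by
  have hP : (A * X) * (A * X) = A * X := by
    calc (A * X) * (A * X) = (A * X * A) * X := by noncomm_ring
    _ = A * X := by rw [h1]
  have hQ : (X * A) * (X * A) = X * A := by
    calc (X * A) * (X * A) = (X * A * X) * A := by noncomm_ring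
    _ = X * A := by rw [h2]
  refine ⟨hP, hQ, by rw [← mul_assoc]; exact h3, by rw [← mul_assoc]; exact h4, ?_⟩
  intro P₁ Q₁ hP₁ hQ₁ hMP₁ hNQ₁ ⟨U, hU⟩ ⟨V, hV⟩ ⟨U', hU'⟩ ⟨V', hV'⟩
  have hMP : (M * (A * X))ᴴ = M * (A * X) := by rw [← mul_assoc]; exact h3
  have hNQ : (N * (X * A))ᴴ = N * (X * A) := by rw [← mul_assoc]; exact h4
  -- P₁ * A = A
  have hPA : P₁ * A = A := by rw [hV, ← mul_assoc, hP₁]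
  -- (A*X) * P₁ = P₁
  have hPP₁ : (A * X) * P₁ = P₁ := by
    rw [hU]
    calc (A * X) * (A * U) = (A * X * A) * U := by noncomm_ring
    _ = A * U := by rw [h1]
  -- P₁ * (A*X) = A*X
  have hP₁P : P₁ * (A * X) = A * X := by rw [← mul_assoc, hPA]
  have key : M * P₁ = M * (A * X) := by
    calc M * P₁ = M * ((A * X) * P₁) := by rw [hPP₁]
    _ = (M * (A * X)) * P₁ := by noncomm_ring
    _ = (M * (A * X))ᴴ * P₁ := by rw [hMP]
    _ = (A * X)ᴴ * (Mᴴ * P₁) := by simp [conjTranspose_mul, mul_assoc]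
    _ = (A * X)ᴴ * (M * P₁) := by rw [hM]
    _ = (A * X)ᴴ * (M * P₁)ᴴ := by rw [hMP₁]
    _ = ((M * P₁) * (A * X))ᴴ := by simp [conjTranspose_mul, mul_assoc]
    _ = (M * (P₁ * (A * X)))ᴴ := by rw [mul_assoc]
    _ = (M * (A * X))ᴴ := by rw [hP₁P]
    _ = M * (A * X) := hMP
  have hPeq : P₁ = A * X := hMu.mul_left_cancel key
  -- Q side
  have hAQ : A * Q₁ = A := by rw [hV', mul_assoc, hQ₁]
  have hQ₁Q : Q₁ * (X * A) = Q₁ := by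
    rw [hU']
    calc (U' * A) * (X * A) = U' * (A * X * A) := by noncomm_ring
    _ = U' * A := by rw [h1]
  have hQQ₁ : (X * A) * Q₁ = X * A := by rw [mul_assoc, hAQ]
  have key2 : N * Q₁ = N * (X * A) := by
    calc N * Q₁ = N * (Q₁ * (X * A)) := by rw [hQ₁Q]
    _ = (N * Q₁) * (X * A) := by noncomm_ring
    _ = (N * Q₁)ᴴ * (X * A) := by rw [hNQ₁]
    _ = Q₁ᴴ * (Nᴴ * (X * A)) := by simp [conjTranspose_mul, mul_assoc]
    _ = Q₁ᴴ * (N * (X * A)) := by rw [hN]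
    _ = Q₁ᴴ * (N * (X * A))ᴴ := by rw [hNQ]
    _ = ((N * (X * A)) * Q₁)ᴴ := by simp [conjTranspose_mul, mul_assoc]
    _ = (N * ((X * A) * Q₁))ᴴ := by rw [mul_assoc]
    _ = (N * (X * A))ᴴ := by rw [hQQ₁]
    _ = N * (X * A) := hNQ
  exact ⟨hPeq, hNu.mul_left_cancel key2⟩
end

section
/- Let M be an invertible Hermitian matrix and A a square matrix with M-weighted core inverse X = A^{core,M}. Then A²X is the group inverse of X. -/
open Matrix

theorem stmt_11 {n : ℕ} (M A X : Matrix (Fin n) (Fin n) ℂ)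
    (hM : Mᴴ = M) (hMu : IsUnit M)
    (h3 : (M * A * X)ᴴ = M * A * X) (h6 : X * A ^ 2 = A) (h7 : A * X ^ 2 = X) :
    X * (A ^ 2 * X) * X = X ∧ (A ^ 2 * X) * X * (A ^ 2 * X) = A ^ 2 * X ∧
      X * (A ^ 2 * X) = (A ^ 2 * X) * X := by
  have h6' : X * A * A = A := by rw [mul_assoc, ← pow_two]; exact h6
  have h7' : A * X * X = X := by rw [mul_assoc, ← pow_two]; exact h7
  refine ⟨?_, ?_, ?_⟩
  · calc X * (A ^ 2 * X) * X = (X * A * A) * X * X := by noncomm_ring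
    _ = A * X * X := by rw [h6']
    _ = X := h7'
  · calc (A ^ 2 * X) * X * (A ^ 2 * X)
        = A * (A * X * X) * A * A * X := by noncomm_ring
    _ = A * X * A * A * X := by rw [h7']
    _ = A * (X * A * A) * X := by noncomm_ring
    _ = A * A * X := by rw [h6']
    _ = A ^ 2 * X := by noncomm_ring
  · calc X * (A ^ 2 * X) = (X * A * A) * X := by noncomm_ring
    _ = A * X := by rw [h6']
    _ = A * (A * X * X) := by rw [h7']
    _ = (A ^ 2 * X) * X := by noncomm_ring
end

section
/- Let M be an invertible Hermitian matrix and A a square matrix with M-weighted core inverse X = A^{core,M}. Then A²X is the M-weighted core inverse of X, i.e., (A^{core,M})^{core,M} = A²A^{core,M}. -/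
open Matrix
set_option maxHeartbeats 1000000

theorem stmt_12 {n : ℕ} (M A X : Matrix (Fin n) (Fin n) ℂ)
    (hM : Mᴴ = M) (hMu : IsUnit M)
    (hind : (A ^ 2).rank = A.rank)
    (h3 : (M * A * X)ᴴ = M * A * X) (h6 : X * A ^ 2 = A) (h7 : A * X ^ 2 = X) :
    (M * X * (A ^ 2 * X))ᴴ = M * X * (A ^ 2 * X) ∧
      (A ^ 2 * X) * X ^ 2 = X ∧ X * (A ^ 2 * X) ^ 2 = A ^ 2 * X := by
  refine ⟨?_, ?_, ?_⟩
  · have e : M * X * (A ^ 2 * X) = M * A * X := by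
      calc M * X * (A ^ 2 * X) = M * (X * A ^ 2) * X := by noncomm_ring
        _ = M * A * X := by rw [h6]
    rw [e, h3]
  · calc (A ^ 2 * X) * X ^ 2 = A * (A * X ^ 2) * X := by noncomm_ring
      _ = A * X * X := by rw [h7]
      _ = A * X ^ 2 := by noncomm_ring
      _ = X := h7
  · calc X * (A ^ 2 * X) ^ 2 = (X * A ^ 2) * (X * A ^ 2) * X := by noncomm_ring
      _ = A * A * X := by rw [h6]
      _ = A ^ 2 * X := by noncomm_ring
end

section
/- Let M be an invertible Hermitian matrix and A a square matrix with M-weighted core inverse X. Then the group inverse of A equals X²A. -/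
open Matrix

theorem stmt_13 {n : ℕ} (M A X : Matrix (Fin n) (Fin n) ℂ)
    (hM : Mᴴ = M) (hMu : IsUnit M)
    (h3 : (M * A * X)ᴴ = M * A * X) (h6 : X * A ^ 2 = A) (h7 : A * X ^ 2 = X) :
    A * (X ^ 2 * A) * A = A ∧ (X ^ 2 * A) * A * (X ^ 2 * A) = X ^ 2 * A ∧
      A * (X ^ 2 * A) = (X ^ 2 * A) * A := by
  refine ⟨?_, ?_, ?_⟩
  · calc A * (X ^ 2 * A) * A = (A * X ^ 2) * A ^ 2 := by noncomm_ring
      _ = X * A ^ 2 := by rw [h7]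
      _ = A := h6
  · calc (X ^ 2 * A) * A * (X ^ 2 * A) = X * (X * A ^ 2) * (X ^ 2 * A) := by noncomm_ring
      _ = X * A * (X ^ 2 * A) := by rw [h6]
      _ = X * (A * X ^ 2) * A := by noncomm_ring
      _ = X * X * A := by rw [h7]
      _ = X ^ 2 * A := by noncomm_ring
  · calc A * (X ^ 2 * A) = (A * X ^ 2) * A := by noncomm_ring
      _ = X * A := by rw [h7]
      _ = X * (X * A ^ 2) := by rw [h6]
      _ = (X ^ 2 * A) * A := by noncomm_ring
end

section
/- Let M be an invertible Hermitian matrix and A a square matrix with M-weighted core inverse X. Then for every natural number n ≥ 1, Xⁿ is the M-weighted core inverse of Aⁿ. -/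
open Matrix

theorem stmt_14 {n : ℕ} (M A X : Matrix (Fin n) (Fin n) ℂ)
    (hM : Mᴴ = M) (hMu : IsUnit M)
    (h3 : (M * A * X)ᴴ = M * A * X) (h6 : X * A ^ 2 = A) (h7 : A * X ^ 2 = X) :
    ∀ k : ℕ, 1 ≤ k →
      (M * A ^ k * X ^ k)ᴴ = M * A ^ k * X ^ k ∧
        X ^ k * (A ^ k) ^ 2 = A ^ k ∧ A ^ k * (X ^ k) ^ 2 = X ^ k := by
  have hAX : ∀ k : ℕ, 1 ≤ k → A ^ k * X ^ k = A * X := by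
    intro k hk
    induction k with
    | zero => omega
    | succ m ih =>
      rcases Nat.lt_or_ge m 1 with hm | hm
      · interval_cases m
        simp
      · obtain ⟨j, rfl⟩ : ∃ j, m = j + 1 := ⟨m - 1, by omega⟩
        have e1 : A ^ (j + 1 + 1) * X ^ (j + 1 + 1)
            = A ^ (j + 1) * (A * X ^ 2) * X ^ j := by
          rw [show j + 1 + 1 = 2 + j from by omega, pow_add X 2 j,
            show A ^ (2 + j) = A ^ (1 + j) * A from by
              rw [← pow_succ]; ring_nf]
          simp only [mul_assoc]
          rw [show 1 + j = j + 1 from by omega]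
        rw [e1, h7, mul_assoc, ← pow_succ' X, ih hm]
  have hX2 : ∀ k : ℕ, 1 ≤ k → X ^ k * (A ^ k) ^ 2 = A ^ k := by
    intro k hk
    induction k with
    | zero => omega
    | succ m ih =>
      rcases Nat.lt_or_ge m 1 with hm | hm
      · interval_cases m
        simpa using h6
      · have e1 : X ^ (m + 1) * (A ^ (m + 1)) ^ 2
            = X ^ m * (X * A ^ 2) * A ^ (2 * m) := by
          rw [← pow_mul, show (m + 1) * 2 = 2 + 2 * m from by omega,
            pow_add A 2 (2 * m), pow_succ X]
          simp only [mul_assoc]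
        have e2 : X ^ m * A * A ^ (2 * m) = X ^ m * A ^ (2 * m) * A := by
          rw [mul_assoc, mul_assoc, ← pow_succ' A, ← pow_succ A]
        rw [e1, h6, e2, show 2 * m = m * 2 by omega, pow_mul, ih hm, ← pow_succ]
  have hA2 : ∀ k : ℕ, 1 ≤ k → A ^ k * (X ^ k) ^ 2 = X ^ k := by
    intro k hk
    induction k with
    | zero => omega
    | succ m ih =>
      rcases Nat.lt_or_ge m 1 with hm | hm
      · interval_cases m
        simpa using h7
      · have e1 : A ^ (m + 1) * (X ^ (m + 1)) ^ 2
            = A ^ m * (A * X ^ 2) * X ^ (2 * m) := by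
          rw [← pow_mul, show (m + 1) * 2 = 2 + 2 * m from by omega,
            pow_add X 2 (2 * m), pow_succ A]
          simp only [mul_assoc]
        have e2 : A ^ m * X * X ^ (2 * m) = A ^ m * X ^ (2 * m) * X := by
          rw [mul_assoc, mul_assoc, ← pow_succ' X, ← pow_succ X]
        rw [e1, h7, e2, show 2 * m = m * 2 by omega, pow_mul, ih hm, ← pow_succ]
  intro k hk
  refine ⟨?_, hX2 k hk, hA2 k hk⟩
  have : M * A ^ k * X ^ k = M * A * X := by
    rw [mul_assoc, hAX k hk, mul_assoc]
  rw [this]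
  exact h3
end

section
/- Let M be an invertible Hermitian matrix and A a square matrix of index 1 whose group inverse A^# equals A^†_{M,M}. Then the range of Aᵀ is contained in the range of (A*M)ᵀ; equivalently A = A M⁻¹ Z A* M for some matrix Z. Conversely, if A = Z A* M for some Z, then A^# = A^†_{M,M}. -/
open Matrix

theorem stmt_16 {n : ℕ} (M A G : Matrix (Fin n) (Fin n) ℂ)
    (hM : Mᴴ = M) (hMu : IsUnit M)
    (hind : (A ^ 2).rank = A.rank)
    (hG1 : A * G * A = A) (hG2 : G * A * G = G) (hG5 : A * G = G * A) :
    (((M * A * G)ᴴ = M * A * G ∧ (M * G * A)ᴴ = M * G * A) →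
      ∃ Z, A = A * M⁻¹ * Z * Aᴴ * M) ∧
    ((∃ Z, A = Z * Aᴴ * M) →
      (M * A * G)ᴴ = M * A * G ∧ (M * G * A)ᴴ = M * G * A) := by
  have hdet : IsUnit M.det := (Matrix.isUnit_iff_isUnit_det M).mp hMu
  have hMinv : M⁻¹ * M = 1 := Matrix.nonsing_inv_mul M hdet
  have hMinvH : M⁻¹ᴴ = M⁻¹ := by rw [Matrix.conjTranspose_nonsing_inv, hM]
  have hcomm : Aᴴ * Gᴴ = Gᴴ * Aᴴ := by
    rw [← Matrix.conjTranspose_mul, ← Matrix.conjTranspose_mul, hG5]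
  constructor
  · rintro ⟨h1, h2⟩
    refine ⟨Gᴴ, ?_⟩
    have hkey : Gᴴ * (Aᴴ * M) = M * (G * A) := by
      conv_rhs => rw [← Matrix.mul_assoc, ← h2]
      simp only [Matrix.conjTranspose_mul, hM, Matrix.mul_assoc]
      rw [← Matrix.mul_assoc Aᴴ Gᴴ M, hcomm, Matrix.mul_assoc]
    calc A = A * G * A := hG1.symm
      _ = A * 1 * (G * A) := by rw [Matrix.mul_one, Matrix.mul_assoc]
      _ = A * (M⁻¹ * M) * (G * A) := by rw [hMinv]
      _ = A * M⁻¹ * (M * (G * A)) := by simp only [Matrix.mul_assoc]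
      _ = A * M⁻¹ * (Gᴴ * (Aᴴ * M)) := by rw [hkey]
      _ = A * M⁻¹ * Gᴴ * Aᴴ * M := by simp only [Matrix.mul_assoc]
  · rintro ⟨Z, hZ⟩
    have keyA : M * (A * Zᴴ) = Aᴴ := by
      conv_rhs => rw [hZ]
      simp only [Matrix.conjTranspose_mul, hM, Matrix.conjTranspose_conjTranspose,
        Matrix.mul_assoc]
    have keyB : M⁻¹ * Aᴴ = A * Zᴴ := by
      rw [← keyA, ← Matrix.mul_assoc, hMinv, Matrix.one_mul]
    -- key2 : M*A*G*M⁻¹*(Gᴴ*Aᴴ*M) = Gᴴ*Aᴴ*M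
    have key2 : M * (A * (G * (M⁻¹ * (Gᴴ * (Aᴴ * M))))) = Gᴴ * (Aᴴ * M) := by
      rw [← Matrix.mul_assoc Gᴴ Aᴴ M, ← hcomm, Matrix.mul_assoc Aᴴ Gᴴ M,
        ← Matrix.mul_assoc M⁻¹ Aᴴ (Gᴴ * M), keyB]
      -- goal : M * (A * (G * (A * Zᴴ * (Gᴴ * M)))) = Aᴴ * (Gᴴ * M)
      calc M * (A * (G * (A * Zᴴ * (Gᴴ * M))))
          = M * (A * G * A) * Zᴴ * (Gᴴ * M) := by simp only [Matrix.mul_assoc]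
        _ = M * (A * Zᴴ) * (Gᴴ * M) := by rw [hG1, Matrix.mul_assoc M A Zᴴ]
        _ = Aᴴ * (Gᴴ * M) := by rw [keyA]
    have hXh : (Gᴴ * (Aᴴ * M))ᴴ = Gᴴ * (Aᴴ * M) := by
      conv_lhs => rw [← key2]
      conv_rhs => rw [← key2]
      simp only [Matrix.conjTranspose_mul, hM, hMinvH,
        Matrix.conjTranspose_conjTranspose, Matrix.mul_assoc]
    -- (Gᴴ*(Aᴴ*M))ᴴ = M*A*G
    have hXH : (Gᴴ * (Aᴴ * M))ᴴ = M * A * G := by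
      simp only [Matrix.conjTranspose_mul, hM, Matrix.conjTranspose_conjTranspose,
        Matrix.mul_assoc]
    have hfin : M * A * G = Gᴴ * (Aᴴ * M) := by rw [← hXH, hXh]
    constructor
    · rw [hfin]; exact hXh
    · rw [Matrix.mul_assoc, ← hG5, ← Matrix.mul_assoc, hfin]; exact hXh
end

section
/- Let M be an invertible Hermitian matrix and A, B square matrices each having M-weighted core inverses. If A^{core,M} B = B^{core,M} A and A A^{core,M} = B A^{core,M}, then (AB)^{core,M} = B^{core,M} A^{core,M} = (A^{core,M})². -/
open Matrix

theorem stmt_17 {n : ℕ} (M A B X Y : Matrix (Fin n) (Fin n) ℂ)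
    (hM : Mᴴ = M) (hMu : IsUnit M)
    (hX3 : (M * A * X)ᴴ = M * A * X) (hX6 : X * A ^ 2 = A) (hX7 : A * X ^ 2 = X)
    (hY3 : (M * B * Y)ᴴ = M * B * Y) (hY6 : Y * B ^ 2 = B) (hY7 : B * Y ^ 2 = Y)
    (hc1 : X * B = Y * A) (hc2 : A * X = B * X) :
    (M * (A * B) * (Y * X))ᴴ = M * (A * B) * (Y * X) ∧
      (Y * X) * (A * B) ^ 2 = A * B ∧ (A * B) * (Y * X) ^ 2 = Y * X ∧
      Y * X = X ^ 2 := by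
  -- A * X * A = A
  have h1 : A * X * A = A := by
    calc A * X * A = A * X * (X * A ^ 2) := by rw [hX6]
      _ = A * X ^ 2 * A ^ 2 := by noncomm_ring
      _ = X * A ^ 2 := by rw [hX7]
      _ = A := hX6
  -- X * A * X = X
  have h2 : X * A * X = X := by
    calc X * A * X = X * A * (A * X ^ 2) := by rw [hX7]
      _ = X * A ^ 2 * X ^ 2 := by noncomm_ring
      _ = A * X ^ 2 := by rw [hX6]
      _ = X := hX7
  -- X * B * X = X
  have h3 : X * B * X = X := by
    calc X * B * X = X * (B * X) := by noncomm_ring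
      _ = X * (A * X) := by rw [← hc2]
      _ = X * A * X := by noncomm_ring
      _ = X := h2
  -- X * A = Y * A
  have h4 : X * A = Y * A := by
    calc X * A = X * B * X * A := by rw [h3]
      _ = X * B * (X * A) := by noncomm_ring
      _ = Y * A * (X * A) := by rw [hc1]
      _ = Y * (A * X * A) := by noncomm_ring
      _ = Y * A := by rw [h1]
  -- Y * X = X ^ 2
  have h6 : Y * X = X ^ 2 := by
    calc Y * X = Y * (A * X ^ 2) := by rw [hX7]
      _ = Y * A * X ^ 2 := by noncomm_ring
      _ = X * A * X ^ 2 := by rw [← h4]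
      _ = X * (A * X ^ 2) := by noncomm_ring
      _ = X * X := by rw [hX7]
      _ = X ^ 2 := by noncomm_ring
  -- A * B * X ^ 2 = A * X
  have h7 : A * B * X ^ 2 = A * X := by
    calc A * B * X ^ 2 = A * (B * X) * X := by noncomm_ring
      _ = A * (A * X) * X := by rw [← hc2]
      _ = A * (A * X ^ 2) := by noncomm_ring
      _ = A * X := by rw [hX7]
  -- (A*X) * (A*B) = A*B
  have hPAB : (A * X) * (A * B) = A * B := by
    calc (A * X) * (A * B) = (A * X * A) * B := by noncomm_ring
      _ = A * B := by rw [h1]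
  -- T := X^2*(A*B) is idempotent
  have hTT : (X ^ 2 * (A * B)) * (X ^ 2 * (A * B)) = X ^ 2 * (A * B) := by
    calc (X ^ 2 * (A * B)) * (X ^ 2 * (A * B))
        = X ^ 2 * ((A * B * X ^ 2) * (A * B)) := by noncomm_ring
      _ = X ^ 2 * ((A * X) * (A * B)) := by rw [h7]
      _ = X ^ 2 * (A * B) := by rw [hPAB]
  -- (A*B) * T = A*B
  have hABT : (A * B) * (X ^ 2 * (A * B)) = A * B := by
    calc (A * B) * (X ^ 2 * (A * B)) = (A * B * X ^ 2) * (A * B) := by noncomm_ring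
      _ = (A * X) * (A * B) := by rw [h7]
      _ = A * B := hPAB
  -- P * T = T
  have hPT : (A * X) * (X ^ 2 * (A * B)) = X ^ 2 * (A * B) := by
    calc (A * X) * (X ^ 2 * (A * B)) = (A * X ^ 2) * (X * (A * B)) := by noncomm_ring
      _ = X * (X * (A * B)) := by rw [hX7]
      _ = X ^ 2 * (A * B) := by noncomm_ring
  -- rank comparisons
  have r1 : (A * B).rank ≤ (X ^ 2 * (A * B)).rank := by
    have := Matrix.rank_mul_le_right (A * B) (X ^ 2 * (A * B))
    rwa [hABT] at this
  have r2 : (X ^ 2 * (A * B)).rank ≤ (A * X).rank := by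
    have := Matrix.rank_mul_le_left (A * X) (X ^ 2 * (A * B))
    rwa [hPT] at this
  have r3 : (A * X).rank ≤ (A * B).rank := by
    have := Matrix.rank_mul_le_left (A * B) (X ^ 2 : Matrix (Fin n) (Fin n) ℂ)
    rwa [h7] at this
  have hrank : (X ^ 2 * (A * B)).rank = (A * X).rank :=
    le_antisymm r2 (r3.trans r1)
  -- range T ≤ range P, hence equal
  have hsub : LinearMap.range (X ^ 2 * (A * B)).mulVecLin ≤
      LinearMap.range (A * X).mulVecLin := by
    rw [← hPT, Matrix.mulVecLin_mul]
    exact LinearMap.range_comp_le_range _ _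
  have hrange : LinearMap.range (X ^ 2 * (A * B)).mulVecLin =
      LinearMap.range (A * X).mulVecLin :=
    Submodule.eq_of_le_of_finrank_eq hsub hrank
  -- T * P = P
  have hTP : (X ^ 2 * (A * B)) * (A * X) = A * X := by
    apply (Matrix.toLin' : Matrix (Fin n) (Fin n) ℂ ≃ₗ[ℂ] _).injective
    apply LinearMap.ext; intro v
    have hv : (A * X) *ᵥ v ∈ LinearMap.range (X ^ 2 * (A * B)).mulVecLin := by
      rw [hrange]; exact ⟨v, rfl⟩
    obtain ⟨u, hu⟩ := hv
    have key : (X ^ 2 * (A * B)) *ᵥ ((A * X) *ᵥ v) = (A * X) *ᵥ v := by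
      rw [← hu]
      simp only [Matrix.mulVecLin_apply, Matrix.mulVec_mulVec, hTT]
    rw [Matrix.toLin'_apply, Matrix.toLin'_apply, ← Matrix.mulVec_mulVec, key]
  -- Part 2
  have part2 : (Y * X) * (A * B) ^ 2 = A * B := by
    rw [h6]
    calc X ^ 2 * (A * B) ^ 2 = (X ^ 2 * (A * B)) * (A * B) := by noncomm_ring
      _ = (X ^ 2 * (A * B)) * ((A * X) * (A * B)) := by rw [hPAB]
      _ = ((X ^ 2 * (A * B)) * (A * X)) * (A * B) := by noncomm_ring
      _ = (A * X) * (A * B) := by rw [hTP]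
      _ = A * B := hPAB
  -- Part 1
  have key1 : M * (A * B) * (Y * X) = M * A * X := by
    rw [h6]
    calc M * (A * B) * X ^ 2 = M * (A * B * X ^ 2) := by noncomm_ring
      _ = M * (A * X) := by rw [h7]
      _ = M * A * X := by noncomm_ring
  have part1 : (M * (A * B) * (Y * X))ᴴ = M * (A * B) * (Y * X) := by
    rw [key1]; exact hX3
  -- Part 3
  have part3 : (A * B) * (Y * X) ^ 2 = Y * X := by
    rw [h6]
    calc (A * B) * (X ^ 2) ^ 2 = (A * B * X ^ 2) * X ^ 2 := by noncomm_ring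
      _ = (A * X) * X ^ 2 := by rw [h7]
      _ = (A * X ^ 2) * X := by noncomm_ring
      _ = X * X := by rw [hX7]
      _ = X ^ 2 := by noncomm_ring
  exact ⟨part1, part2, part3, h6⟩
end

section
/- Let M be an invertible Hermitian matrix and A, B square matrices of index 1 with M-weighted core inverses such that A² = BA. Then AB has index 1 and (AB)^{core,M} = B^{core,M} A^{core,M}. -/
open Matrix

theorem stmt_18 {n : ℕ} (M A B X Y : Matrix (Fin n) (Fin n) ℂ)
    (hM : Mᴴ = M) (hMu : IsUnit M)
    (hindA : (A ^ 2).rank = A.rank) (hindB : (B ^ 2).rank = B.rank)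
    (hX3 : (M * A * X)ᴴ = M * A * X) (hX6 : X * A ^ 2 = A) (hX7 : A * X ^ 2 = X)
    (hY3 : (M * B * Y)ᴴ = M * B * Y) (hY6 : Y * B ^ 2 = B) (hY7 : B * Y ^ 2 = Y)
    (hAB : A ^ 2 = B * A) :
    ((A * B) ^ 2).rank = (A * B).rank ∧
      (M * (A * B) * (Y * X))ᴴ = M * (A * B) * (Y * X) ∧
      (Y * X) * (A * B) ^ 2 = A * B ∧ (A * B) * (Y * X) ^ 2 = Y * X := by
  -- B * Y * B = B
  have hBYB : B * Y * B = B := by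
    have e1 : B * Y * (Y * B ^ 2) = (B * Y ^ 2) * B ^ 2 := by noncomm_ring
    calc B * Y * B = B * Y * (Y * B ^ 2) := by rw [hY6]
      _ = (B * Y ^ 2) * B ^ 2 := e1
      _ = Y * B ^ 2 := by rw [hY7]
      _ = B := hY6
  -- the key column-space lemma: B * Y * A = A
  have hre : LinearMap.range (A ^ 2).mulVecLin = LinearMap.range A.mulVecLin := by
    have hle : LinearMap.range (A ^ 2).mulVecLin ≤ LinearMap.range A.mulVecLin := by
      rintro x ⟨v, rfl⟩
      refine ⟨A *ᵥ v, ?_⟩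
      simp [pow_two, mulVecLin_apply, mulVec_mulVec]
    exact Submodule.eq_of_le_of_finrank_eq hle hindA
  have hBYA : B * Y * A = A := by
    have hcol : ∀ v, (B * Y * A) *ᵥ v = A *ᵥ v := by
      intro v
      have hmem : A *ᵥ v ∈ LinearMap.range (A ^ 2).mulVecLin := by
        rw [hre]; exact ⟨v, rfl⟩
      obtain ⟨u, hu⟩ := hmem
      have hu' : (B * A) *ᵥ u = A *ᵥ v := by
        rw [← hAB]; simpa [mulVecLin_apply] using hu
      calc (B * Y * A) *ᵥ v = (B * Y) *ᵥ (A *ᵥ v) := by rw [mulVec_mulVec]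
        _ = (B * Y) *ᵥ ((B * A) *ᵥ u) := by rw [hu']
        _ = ((B * Y) * (B * A)) *ᵥ u := by rw [mulVec_mulVec]
        _ = ((B * Y * B) * A) *ᵥ u := by rw [mul_assoc (B * Y) B A, ← mul_assoc]
        _ = (B * A) *ᵥ u := by rw [hBYB]
        _ = A *ᵥ v := hu'
    ext i j
    have h := congrFun (hcol (Pi.single j 1)) i
    simpa [mulVec_single] using h
  -- Y * B * A = A
  have hYBA : Y * B * A = A := by
    have e1 : Y * B * (B * Y * A) = (Y * B ^ 2) * (Y * A) := by noncomm_ring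
    calc Y * B * A = Y * B * (B * Y * A) := by rw [hBYA]
      _ = (Y * B ^ 2) * (Y * A) := e1
      _ = B * (Y * A) := by rw [hY6]
      _ = B * Y * A := by rw [mul_assoc]
      _ = A := hBYA
  -- X = A^2 * X^3
  have hL3 : A ^ 2 * X ^ 3 = X := by
    have e1 : A ^ 2 * X ^ 3 = A * (A * X ^ 2 * X) := by noncomm_ring
    rw [e1, hX7]
    have e2 : A * (X * X) = A * X ^ 2 := by noncomm_ring
    rw [e2, hX7]
  -- Y * X = A * X^3
  have hYX : Y * X = A * X ^ 3 := by
    have e1 : Y * (B * A * X ^ 3) = (Y * B * A) * X ^ 3 := by noncomm_ring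
    calc Y * X = Y * (A ^ 2 * X ^ 3) := by rw [hL3]
      _ = Y * (B * A * X ^ 3) := by rw [hAB]
      _ = (Y * B * A) * X ^ 3 := e1
      _ = A * X ^ 3 := by rw [hYBA]
  -- A * X * A = A
  have hAXA : A * X * A = A := by
    have e1 : A * X * (X * A ^ 2) = (A * X ^ 2) * A ^ 2 := by noncomm_ring
    calc A * X * A = A * X * (X * A ^ 2) := by rw [hX6]
      _ = (A * X ^ 2) * A ^ 2 := e1
      _ = X * A ^ 2 := by rw [hX7]
      _ = A := hX6
  -- X^2 * A^2 = X * A and X^3 * A^3 = X * A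
  have hX2A2 : X ^ 2 * A ^ 2 = X * A := by
    have e1 : X ^ 2 * A ^ 2 = X * (X * A ^ 2) := by noncomm_ring
    rw [e1, hX6]
  have hXA3 : X ^ 3 * A ^ 3 = X * A := by
    have e1 : X ^ 3 * A ^ 3 = X ^ 2 * (X * A ^ 2) * A := by noncomm_ring
    rw [e1, hX6]
    have e2 : X ^ 2 * A * A = X ^ 2 * A ^ 2 := by noncomm_ring
    rw [e2, hX2A2]
  -- A^2 * X^2 = A * X and A^3 * X^3 = A * X
  have hA2X2 : A ^ 2 * X ^ 2 = A * X := by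
    have e1 : A ^ 2 * X ^ 2 = A * (A * X ^ 2) := by noncomm_ring
    rw [e1, hX7]
  have hA3X3 : A ^ 3 * X ^ 3 = A * X := by
    have e1 : A ^ 3 * X ^ 3 = A ^ 2 * (A * X ^ 2) * X := by noncomm_ring
    rw [e1, hX7]
    have e2 : A ^ 2 * X * X = A ^ 2 * X ^ 2 := by noncomm_ring
    rw [e2, hA2X2]
  -- condition 2
  have hc2 : (Y * X) * (A * B) ^ 2 = A * B := by
    rw [hYX]
    have e1 : A * X ^ 3 * (A * B) ^ 2 = A * X ^ 3 * (A * (B * A) * B) := by noncomm_ring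
    rw [e1, ← hAB]
    have e2 : A * X ^ 3 * (A * A ^ 2 * B) = A * (X ^ 3 * A ^ 3) * B := by noncomm_ring
    rw [e2, hXA3]
    have e3 : A * (X * A) * B = (A * X * A) * B := by noncomm_ring
    rw [e3, hAXA]
  -- condition 3
  have hc3 : (A * B) * (Y * X) ^ 2 = Y * X := by
    rw [hYX]
    have e1 : A * B * (A * X ^ 3) ^ 2 = A * (B * A) * (X ^ 3 * A) * X ^ 3 := by noncomm_ring
    rw [e1, ← hAB]
    have e2 : A * A ^ 2 * (X ^ 3 * A) * X ^ 3 = (A ^ 3 * X ^ 3) * (A * X ^ 3) := by noncomm_ring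
    rw [e2, hA3X3]
    have e3 : A * X * (A * X ^ 3) = (A * X * A) * X ^ 3 := by noncomm_ring
    rw [e3, hAXA]
  -- condition 1 (hermitian)
  have hc1 : (M * (A * B) * (Y * X))ᴴ = M * (A * B) * (Y * X) := by
    have key : M * (A * B) * (Y * X) = M * A * X := by
      rw [hYX]
      have e1 : M * (A * B) * (A * X ^ 3) = M * A * (B * A * X ^ 3) := by noncomm_ring
      rw [e1, ← hAB, hL3]
    rw [key]; exact hX3
  -- rank condition
  have hrank : ((A * B) ^ 2).rank = (A * B).rank := by
    apply le_antisymm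
    · calc ((A * B) ^ 2).rank = ((A * B) * (A * B)).rank := by rw [pow_two]
        _ ≤ (A * B).rank := rank_mul_le_left _ _
    · calc (A * B).rank = ((Y * X) * (A * B) ^ 2).rank := by rw [hc2]
        _ ≤ ((A * B) ^ 2).rank := rank_mul_le_right _ _
  exact ⟨hrank, hc1, hc2, hc3⟩
end

section
/- Let M be an invertible Hermitian matrix and A, B square matrices of index 1 with B unitary, A having M-weighted core inverse X = A^{core,M}, and range(B*X) ⊆ range(X). Then B*X is the M-weighted core inverse of AB. -/
open Matrix

theorem stmt_19 {n : ℕ} (M A B X : Matrix (Fin n) (Fin n) ℂ)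
    (hM : Mᴴ = M) (hMu : IsUnit M)
    (hindA : (A ^ 2).rank = A.rank) (hindB : (B ^ 2).rank = B.rank)
    (hB1 : B * Bᴴ = 1) (hB2 : Bᴴ * B = 1)
    (hX3 : (M * A * X)ᴴ = M * A * X) (hX6 : X * A ^ 2 = A) (hX7 : A * X ^ 2 = X)
    (hrange : ∃ U, Bᴴ * X = X * U) :
    (M * (A * B) * (Bᴴ * X))ᴴ = M * (A * B) * (Bᴴ * X) ∧
      (Bᴴ * X) * (A * B) ^ 2 = A * B ∧ (A * B) * (Bᴴ * X) ^ 2 = Bᴴ * X := by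
  obtain ⟨U, hU⟩ := hrange
  have hX6' : X * A * A = A := by have h := hX6; rwa [pow_two, ← mul_assoc] at h
  have hX7' : A * X * X = X := by have h := hX7; rwa [pow_two, ← mul_assoc] at h
  -- B^H * A = A * W
  set W : Matrix (Fin n) (Fin n) ℂ := X * X * U * A * A with hW
  have hBA : Bᴴ * A = A * W := by
    have h1 : Bᴴ * A = X * U * A * A := by
      calc Bᴴ * A = Bᴴ * X * A * A := by rw [mul_assoc, mul_assoc, ← mul_assoc X, hX6']
        _ = X * U * A * A := by rw [hU]
    calc Bᴴ * A = X * U * A * A := h1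
      _ = (A * X * X) * U * A * A := by rw [hX7']
      _ = A * W := by rw [hW]; simp only [mul_assoc]
  have hpowA : ∀ k : ℕ, Bᴴ ^ k * A = A * W ^ k := by
    intro k
    induction k with
    | zero => simp
    | succ k ih =>
        calc Bᴴ ^ (k+1) * A = Bᴴ ^ k * (Bᴴ * A) := by rw [pow_succ, mul_assoc]
          _ = Bᴴ ^ k * A * W := by rw [hBA, mul_assoc]
          _ = A * W ^ (k+1) := by rw [ih, pow_succ, mul_assoc]
  have hpoly : ∀ q : Polynomial ℂ, (Polynomial.aeval Bᴴ q) * A = A * Polynomial.aeval W q := by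
    intro q
    induction q using Polynomial.induction_on with
    | C a => simp [Algebra.commutes, ← mul_assoc, Algebra.commutes a A]
    | add p q hp hq => simp [add_mul, mul_add, hp, hq]
    | monomial k a ih =>
        simp only [_root_.map_mul, Polynomial.aeval_C, Polynomial.aeval_X_pow]
        calc algebraMap ℂ (Matrix (Fin n) (Fin n) ℂ) a * Bᴴ ^ (k+1) * A
            = algebraMap ℂ (Matrix (Fin n) (Fin n) ℂ) a * (Bᴴ ^ (k+1) * A) := by
              rw [mul_assoc]
          _ = algebraMap ℂ (Matrix (Fin n) (Fin n) ℂ) a * (A * W ^ (k+1)) := by rw [hpowA]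
          _ = A * (algebraMap ℂ (Matrix (Fin n) (Fin n) ℂ) a * W ^ (k+1)) := by
              rw [← mul_assoc, Algebra.commutes, mul_assoc]
  -- Cayley-Hamilton: B is a polynomial in Bᴴ
  have hdet : (Bᴴ).det ≠ 0 := by
    intro h
    have h2 : (Bᴴ * B).det = 0 := by rw [det_mul, h, zero_mul]
    rw [hB2, det_one] at h2; exact one_ne_zero h2
  set p := (Bᴴ).charpoly with hp
  have hc0 : p.coeff 0 ≠ 0 := by
    intro h
    exact hdet (by rw [Matrix.det_eq_sign_charpoly_coeff, ← hp, h, mul_zero])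
  have hCH : Polynomial.aeval Bᴴ p = 0 := Matrix.aeval_self_charpoly Bᴴ
  have h0 : Polynomial.aeval Bᴴ p.divX * Bᴴ + (p.coeff 0) • (1 : Matrix (Fin n) (Fin n) ℂ)
      = 0 := by
    have h1 := congrArg (Polynomial.aeval Bᴴ) (Polynomial.divX_mul_X_add p)
    rw [hCH, map_add, _root_.map_mul, Polynomial.aeval_X, Polynomial.aeval_C,
      Algebra.algebraMap_eq_smul_one] at h1
    exact h1
  have h1 : Polynomial.aeval Bᴴ p.divX + (p.coeff 0) • B = 0 := by
    have h2 := congrArg (· * B) h0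
    simpa [add_mul, mul_assoc, hB2, smul_mul_assoc] using h2
  have hBpoly : B = -((p.coeff 0)⁻¹ • Polynomial.aeval Bᴴ p.divX) := by
    have h2 : (p.coeff 0) • B = -Polynomial.aeval Bᴴ p.divX :=
      eq_neg_of_add_eq_zero_left (by rw [add_comm]; exact h1)
    calc B = (p.coeff 0)⁻¹ • ((p.coeff 0) • B) := (inv_smul_smul₀ hc0 B).symm
      _ = -((p.coeff 0)⁻¹ • Polynomial.aeval Bᴴ p.divX) := by rw [h2, smul_neg]
  -- hence B * A = A * W' for some W'
  set W' : Matrix (Fin n) (Fin n) ℂ := -((p.coeff 0)⁻¹ • Polynomial.aeval W p.divX) with hW'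
  have hBA' : B * A = A * W' := by
    rw [hBpoly, hW', neg_mul, smul_mul_assoc, hpoly, mul_neg, mul_smul_comm]
  have hXABA : X * A * (B * A) = B * A := by
    calc X * A * (B * A) = X * A * (A * W') := by rw [hBA']
      _ = (X * A * A) * W' := by simp only [mul_assoc]
      _ = A * W' := by rw [hX6']
      _ = B * A := hBA'.symm
  refine ⟨?_, ?_, ?_⟩
  · have key : M * (A * B) * (Bᴴ * X) = M * A * X := by
      calc M * (A * B) * (Bᴴ * X) = M * (A * ((B * Bᴴ) * X)) := by simp only [mul_assoc]
        _ = M * A * X := by rw [hB1, one_mul, mul_assoc]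
    rw [key]; exact hX3
  · calc (Bᴴ * X) * (A * B) ^ 2 = Bᴴ * ((X * A * (B * A)) * B) := by
          rw [pow_two]; simp only [mul_assoc]
      _ = Bᴴ * ((B * A) * B) := by rw [hXABA]
      _ = (Bᴴ * B) * (A * B) := by simp only [mul_assoc]
      _ = A * B := by rw [hB2, one_mul]
  · calc (A * B) * (Bᴴ * X) ^ 2 = A * ((B * Bᴴ) * (X * (Bᴴ * X))) := by
          rw [pow_two]; simp only [mul_assoc]
      _ = A * (X * (X * U)) := by rw [hB1, one_mul, hU]
      _ = (A * X * X) * U := by simp only [mul_assoc]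
      _ = X * U := by rw [hX7']
      _ = Bᴴ * X := hU.symm
end
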